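/- arXiv:0801.2118 — 5 statements merged into one kernel-verified Lean document; each statement's English description precedes it below -/
import Mathlib

section
/- Let n ≥ 1 and let M be an n×n matrix with integer entries such that det M = 1 or det M = -1, and suppose the entries of the powers of M grow at most polynomially: there exist constants c > 0 and d ∈ ℕ such that |(M^r)_{i,j}| ≤ c·(r+1)^d for every natural number r and all indices i, j. Then every complex eigenvalue of M (i.e., every complex root of the characteristic polynomial of M) is a root of unity. -/
/-!
An eigenvector `v` of `M` for `λ` gives `λ ^ r • v = M ^ r *ᵥ v`, so polynomial growth of
the entries of `M ^ r` forces `‖λ‖ ≤ 1`. This holds for every root of the characteristic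
polynomial, i.e. for all Galois conjugates of the algebraic integer `λ`, and `λ ≠ 0` since `M`
is invertible. Kronecker's theorem then makes `λ` a root of unity.
-/

open Polynomial Asymptotics Filter Matrix

theorem le_one_of_forall_pow_le_mul_succ_pow {a C : ℝ} {d : ℕ} (ha : 0 ≤ a)
    (h : ∀ r : ℕ, a ^ r ≤ C * ((r : ℝ) + 1) ^ d) : a ≤ 1 := by
  by_contra! ha1
  have hbigO : (fun r : ℕ ↦ a ^ r) =O[atTop] fun r ↦ ((r : ℝ) + 1) ^ d :=
    IsBigO.of_bound C (Eventually.of_forall fun r ↦ by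
      simpa [abs_of_nonneg ha, abs_of_pos (Nat.cast_add_one_pos (α := ℝ) r)] using h r)
  have hlittleO : (fun r : ℕ ↦ ((r : ℝ) + 1) ^ d) =o[atTop] fun r ↦ a ^ r := by
    have := (isLittleO_pow_const_const_pow_of_one_lt (R := ℝ) d ha1).comp_tendsto
      (tendsto_add_atTop_nat 1)
    refine (this.trans_isBigO ?_).congr_left fun r ↦ by simp
    exact IsBigO.of_bound a (Eventually.of_forall fun r ↦ by
      simp [pow_succ, abs_of_nonneg ha, mul_comm])
  exact isLittleO_irrefl (Frequently.of_forall fun r ↦ pow_ne_zero r (by linarith))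
    (hbigO.trans_isLittleO hlittleO)

theorem Matrix.norm_le_one_of_isRoot_charpoly {𝕜 n : Type*} [NormedField 𝕜] [Fintype n]
    [DecidableEq n] {A : Matrix n n 𝕜} {c : ℝ} {d : ℕ}
    (hA : ∀ (r : ℕ) (i j : n), ‖(A ^ r) i j‖ ≤ c * ((r : ℝ) + 1) ^ d)
    {μ : 𝕜} (hμ : A.charpoly.IsRoot μ) : ‖μ‖ ≤ 1 := by
  rw [← charpoly_toLin', ← Module.End.hasEigenvalue_iff_isRoot_charpoly] at hμ
  obtain ⟨v, hv⟩ := hμ.exists_hasEigenvector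
  obtain ⟨i, hvi⟩ : ∃ i, v i ≠ 0 := Function.ne_iff.mp hv.2
  refine le_one_of_forall_pow_le_mul_succ_pow (C := c * (∑ j, ‖v j‖) / ‖v i‖) (d := d)
    (norm_nonneg μ) fun r ↦ ?_
  have hvr : (A ^ r) *ᵥ v = μ ^ r • v := by
    simpa [← toLin'_pow] using hv.pow_apply r
  rw [div_mul_eq_mul_div, le_div_iff₀ (norm_pos_iff.mpr hvi)]
  calc ‖μ‖ ^ r * ‖v i‖ = ‖∑ j, (A ^ r) i j * v j‖ := by
        rw [← norm_pow, ← norm_mul, ← smul_eq_mul, ← Pi.smul_apply, ← hvr]; rfl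
    _ ≤ ∑ j, c * ((r : ℝ) + 1) ^ d * ‖v j‖ := by
        refine (norm_sum_le _ _).trans (Finset.sum_le_sum fun j _ ↦ ?_)
        rw [norm_mul]
        exact mul_le_mul_of_nonneg_right (hA r i j) (norm_nonneg _)
    _ = c * (∑ j, ‖v j‖) * ((r : ℝ) + 1) ^ d := by rw [← Finset.mul_sum]; ring

theorem Polynomial.pow_eq_one_of_forall_norm_root_le_one {p : ℤ[X]} (hp : p.Monic)
    (hroots : ∀ z : ℂ, aeval z p = 0 → ‖z‖ ≤ 1) {z : ℂ} (hz : aeval z p = 0)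
    (hz0 : z ≠ 0) :
    ∃ k, 0 < k ∧ z ^ k = 1 := by
  have hint : IsIntegral ℤ z := ⟨p, hp, by rwa [← aeval_def]⟩
  let K := IntermediateField.adjoin ℚ ({z} : Set ℂ)
  have : FiniteDimensional ℚ K := IntermediateField.adjoin.finiteDimensional hint.tower_top
  have : NumberField K := ⟨⟩
  let x : K := IntermediateField.AdjoinSimple.gen ℚ z
  have hx : algebraMap K ℂ x = z := IntermediateField.AdjoinSimple.algebraMap_gen ℚ z
  have hxp : aeval x p = 0 := (algebraMap K ℂ).injective <| by
    rw [← aeval_algebraMap_apply, hx, hz, map_zero]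
  obtain ⟨k, hk, hxk⟩ := NumberField.Embeddings.pow_eq_one_of_norm_le_one K ℂ
    (x := x) (fun hx0 ↦ hz0 (by rw [← hx, hx0, map_zero]))
    ((isIntegral_algebraMap_iff (algebraMap K ℂ).injective).mp (hx ▸ hint))
    fun φ ↦ hroots _ ((aeval_algHom_apply φ.toIntAlgHom x p).trans (by rw [hxp, map_zero]))
  exact ⟨k, hk, by rw [← hx, ← map_pow, hxk, map_one]⟩

theorem stmt_0_general (n : ℕ) (M : Matrix (Fin n) (Fin n) ℤ)
    (hdet : M.det = 1 ∨ M.det = -1)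
    (hgrowth : ∃ (c : ℝ) (d : ℕ), 0 < c ∧
      ∀ (r : ℕ) (i j : Fin n), |((M ^ r) i j : ℝ)| ≤ c * (r + 1) ^ d)
    (lam : ℂ) (hlam : ((M.map (Int.cast : ℤ → ℂ)).charpoly).IsRoot lam) :
    ∃ k : ℕ, 0 < k ∧ lam ^ k = 1 := by
  obtain ⟨c, d, -, hM⟩ := hgrowth
  set A := M.map (Int.castRingHom ℂ)
  have hroot (z : ℂ) : aeval z M.charpoly = 0 ↔ A.charpoly.IsRoot z := by
    rw [charpoly_map, IsRoot, eval_map, aeval_def, algebraMap_int_eq]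
  have hA (r : ℕ) (i j : Fin n) : ‖(A ^ r) i j‖ ≤ c * ((r : ℝ) + 1) ^ d := by
    have hpow : A ^ r = (M ^ r).map (Int.castRingHom ℂ) :=
      (map_pow (Int.castRingHom ℂ).mapMatrix M r).symm
    simpa [hpow] using hM r i j
  have hunit : IsUnit A :=
    ((isUnit_iff_isUnit_det M).mpr (Int.isUnit_iff.mpr hdet)).map (Int.castRingHom ℂ).mapMatrix
  have hlam0 : lam ≠ 0 := by
    rintro rfl
    exact (spectrum.zero_mem_iff ℂ).mp (mem_spectrum_iff_isRoot_charpoly.mpr hlam) hunit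
  exact pow_eq_one_of_forall_norm_root_le_one M.charpoly_monic
    (fun z hz ↦ norm_le_one_of_isRoot_charpoly hA ((hroot z).mp hz)) ((hroot lam).mpr hlam) hlam0

/-- If `M` is an integer square matrix with determinant `±1` whose powers have
polynomially growing entries, then every complex eigenvalue of `M` (i.e. every
complex root of its characteristic polynomial) is a root of unity. -/
theorem stmt_0 (n : ℕ) (hn : 1 ≤ n) (M : Matrix (Fin n) (Fin n) ℤ)
    (hdet : M.det = 1 ∨ M.det = -1)
    (hgrowth : ∃ (c : ℝ) (d : ℕ), 0 < c ∧
      ∀ (r : ℕ) (i j : Fin n), |((M ^ r) i j : ℝ)| ≤ c * (r + 1) ^ d)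
    (lam : ℂ) (hlam : ((M.map (Int.cast : ℤ → ℂ)).charpoly).IsRoot lam) :
    ∃ k : ℕ, 0 < k ∧ lam ^ k = 1 :=
  stmt_0_general n M hdet hgrowth lam hlam
end

section
/- Let m ≥ 1, let φ(X) = X^m + a_{m−1}X^{m−1} + ⋯ + a_0 be a monic integer polynomial, and let C be its companion matrix (the m×m integer matrix with C_{i+1,i} = 1 for 0 ≤ i ≤ m−2, C_{i,m−1} = −a_i, and all other entries 0). Let X and Y be the 2m×2m integer matrices written in m×m blocks as X = [[I, I],[0, I]] and Y = [[I, 0],[C, I]]. Then X·Y − Y·X = [[C, 0],[0, −C]], and the cokernel ℤ^{2m} / (X·Y − Y·X)·ℤ^{2m} is isomorphic as an abelian group to ℤ/(φ(0)) × ℤ/(φ(0)); in particular it is finite whenever φ(0) ≠ 0. -/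
set_option maxHeartbeats 1000000 in
open Matrix in
lemma key_lemma (m : ℕ) (hm : 1 ≤ m) (φ : Polynomial ℤ)
    (C : Matrix (Fin m) (Fin m) ℤ)
    (hC : ∀ i j : Fin m, C i j =
      (if (i : ℕ) = (j : ℕ) + 1 then 1 else 0) +
      (if (j : ℕ) = m - 1 then -φ.coeff i else 0))
    (v : Fin m → ℤ) :
    (∃ w, C.mulVec w = v) ↔ φ.eval 0 ∣ v ⟨0, hm⟩ := by
  have hml : m - 1 < m := by omega
  have ha : φ.coeff 0 = φ.eval 0 := Polynomial.coeff_zero_eq_eval_zero φ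
  constructor
  · rintro ⟨w, rfl⟩
    have : C.mulVec w ⟨0, hm⟩ = -φ.eval 0 * w ⟨m - 1, hml⟩ := by
      simp only [Matrix.mulVec, dotProduct]
      rw [Finset.sum_congr rfl (fun j _ => show C ⟨0, hm⟩ j * w j =
          (if j = (⟨m - 1, hml⟩ : Fin m) then -φ.eval 0 * w j else 0) from ?_),
        Finset.sum_ite_eq']
      · simp
      · rw [hC]
        rcases eq_or_ne (j : ℕ) (m - 1) with h | h
        · have : j = (⟨m - 1, hml⟩ : Fin m) := Fin.ext h
          simp [this, ha, h]
        · have : j ≠ (⟨m - 1, hml⟩ : Fin m) := by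
            intro hh; exact h (by simpa using congrArg Fin.val hh)
          simp [this, h]
    rw [this]
    exact ⟨-w ⟨m - 1, hml⟩, by ring⟩
  · rintro ⟨c, hc⟩
    refine ⟨fun j => if h : (j : ℕ) = m - 1 then -c
      else v ⟨(j : ℕ) + 1, by omega⟩ - φ.coeff ((j : ℕ) + 1) * c, ?_⟩
    funext i
    simp only [Matrix.mulVec, dotProduct]
    rw [Finset.sum_congr rfl (fun j _ => show C i j *
        (if h : (j : ℕ) = m - 1 then -c
          else v ⟨(j : ℕ) + 1, by omega⟩ - φ.coeff ((j : ℕ) + 1) * c) =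
        ((if (i : ℕ) = (j : ℕ) + 1 then 1 else 0) *
          (if h : (j : ℕ) = m - 1 then -c
            else v ⟨(j : ℕ) + 1, by omega⟩ - φ.coeff ((j : ℕ) + 1) * c)) +
        ((if (j : ℕ) = m - 1 then -φ.coeff i else 0) *
          (if h : (j : ℕ) = m - 1 then -c
            else v ⟨(j : ℕ) + 1, by omega⟩ - φ.coeff ((j : ℕ) + 1) * c)) from by
          rw [hC i j]; ring), Finset.sum_add_distrib]
    have h2 : (∑ j : Fin m, (if (j : ℕ) = m - 1 then -φ.coeff i else 0) *
        (if h : (j : ℕ) = m - 1 then -c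
          else v ⟨(j : ℕ) + 1, by omega⟩ - φ.coeff ((j : ℕ) + 1) * c)) = φ.coeff i * c := by
      rw [Finset.sum_congr rfl (fun j _ => show _ =
          (if j = (⟨m - 1, hml⟩ : Fin m) then φ.coeff i * c else 0) from ?_),
        Finset.sum_ite_eq']
      · simp
      · rcases eq_or_ne (j : ℕ) (m - 1) with h | h
        · have hj : j = (⟨m - 1, hml⟩ : Fin m) := Fin.ext h
          simp [hj, h]
          try ring
        · have hj : j ≠ (⟨m - 1, hml⟩ : Fin m) := by
            intro hh; exact h (by simpa using congrArg Fin.val hh)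
          simp [hj, h]
    rw [h2]
    rcases Nat.eq_zero_or_pos (i : ℕ) with h0 | hpos
    · have hi : i = (⟨0, hm⟩ : Fin m) := Fin.ext h0
      have h1 : (∑ j : Fin m, (if (i : ℕ) = (j : ℕ) + 1 then (1:ℤ) else 0) *
          (if h : (j : ℕ) = m - 1 then -c
            else v ⟨(j : ℕ) + 1, by omega⟩ - φ.coeff ((j : ℕ) + 1) * c)) = 0 := by
        apply Finset.sum_eq_zero
        intro j _
        have : ¬ ((i : ℕ) = (j : ℕ) + 1) := by omega
        simp [this]
      rw [h1, hi, hc, ha]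
      ring
    · have hklt : (i : ℕ) - 1 < m := by omega
      set k : Fin m := ⟨(i : ℕ) - 1, hklt⟩ with hk
      have hik : (i : ℕ) = (k : ℕ) + 1 := by simp [hk]; omega
      have hkm : (k : ℕ) ≠ m - 1 := by have := i.isLt; simp [hk]; omega
      have h1 : (∑ j : Fin m, (if (i : ℕ) = (j : ℕ) + 1 then (1:ℤ) else 0) *
          (if h : (j : ℕ) = m - 1 then -c
            else v ⟨(j : ℕ) + 1, by omega⟩ - φ.coeff ((j : ℕ) + 1) * c)) =
          v i - φ.coeff i * c := by
        rw [Finset.sum_congr rfl (fun j _ => show _ =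
            (if j = k then v i - φ.coeff i * c else 0) from ?_), Finset.sum_ite_eq']
        · simp
        · rcases eq_or_ne j k with h | h
          · subst h
            have hvi : (⟨(k : ℕ) + 1, by omega⟩ : Fin m) = i := by
              apply Fin.ext; simp [hk]; omega
            rw [dif_neg hkm, if_pos hik, if_pos rfl, hvi, one_mul, ← hik]
          · have : ¬ ((i : ℕ) = (j : ℕ) + 1) := by
              intro hh
              exact h (Fin.ext (by omega))
            simp [this, h]
      rw [h1]; ring

/-- For the block matrices `X = [[I,I],[0,I]]` and `Y = [[I,0],[C,I]]`, where `C` is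
the companion matrix of a monic integer polynomial `φ` of degree `m ≥ 1`, one has
`X*Y - Y*X = [[C,0],[0,-C]]`, and the cokernel of `X*Y - Y*X` on `ℤ^{2m}` is
isomorphic to `ℤ/(φ(0)) × ℤ/(φ(0))`; in particular it is finite when `φ(0) ≠ 0`. -/
theorem stmt_5 (m : ℕ) (hm : 1 ≤ m) (φ : Polynomial ℤ) (hmonic : φ.Monic)
    (hdeg : φ.natDegree = m) (C : Matrix (Fin m) (Fin m) ℤ)
    (hC : ∀ i j : Fin m, C i j =
      (if (i : ℕ) = (j : ℕ) + 1 then 1 else 0) +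
      (if (j : ℕ) = m - 1 then -φ.coeff i else 0))
    (X Y : Matrix (Fin m ⊕ Fin m) (Fin m ⊕ Fin m) ℤ)
    (hX : X = Matrix.fromBlocks 1 1 0 1)
    (hY : Y = Matrix.fromBlocks 1 0 C 1) :
    X * Y - Y * X = Matrix.fromBlocks C 0 0 (-C) ∧
    Nonempty (((Fin m ⊕ Fin m → ℤ) ⧸ LinearMap.range (Matrix.toLin' (X * Y - Y * X)))
      ≃+ ((ℤ ⧸ Ideal.span ({φ.eval 0} : Set ℤ)) × (ℤ ⧸ Ideal.span ({φ.eval 0} : Set ℤ)))) ∧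
    (φ.eval 0 ≠ 0 →
      Finite ((Fin m ⊕ Fin m → ℤ) ⧸ LinearMap.range (Matrix.toLin' (X * Y - Y * X)))) := by
  have hcomm : X * Y - Y * X = Matrix.fromBlocks C 0 0 (-C) := by
    subst hX hY
    rw [Matrix.fromBlocks_multiply, Matrix.fromBlocks_multiply]
    ext (i|i) (j|j) <;> simp
  refine ⟨hcomm, ?_⟩
  rw [hcomm]
  set M : Matrix (Fin m ⊕ Fin m) (Fin m ⊕ Fin m) ℤ := Matrix.fromBlocks C 0 0 (-C) with hM
  have key := key_lemma m hm φ C hC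
  set I : Ideal ℤ := Ideal.span ({φ.eval 0} : Set ℤ) with hI
  set i0 : Fin m := ⟨0, hm⟩ with hi0
  have keyM : ∀ v : Fin m ⊕ Fin m → ℤ, (∃ w, M.mulVec w = v) ↔
      (φ.eval 0 ∣ v (Sum.inl i0) ∧ φ.eval 0 ∣ v (Sum.inr i0)) := by
    intro v
    constructor
    · rintro ⟨w, rfl⟩
      rw [hM, Matrix.fromBlocks_mulVec]
      constructor
      · simpa using (key _).mp ⟨w ∘ Sum.inl, rfl⟩
      · have : (-C).mulVec (w ∘ Sum.inr) = C.mulVec (-(w ∘ Sum.inr)) := by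
          rw [Matrix.neg_mulVec, Matrix.mulVec_neg]
        simpa [this] using (key _).mp ⟨-(w ∘ Sum.inr), rfl⟩
    · rintro ⟨h1, h2⟩
      obtain ⟨w1, hw1⟩ := (key (v ∘ Sum.inl)).mpr h1
      obtain ⟨w2, hw2⟩ := (key (v ∘ Sum.inr)).mpr h2
      refine ⟨Sum.elim w1 (-w2), ?_⟩
      rw [hM, Matrix.fromBlocks_mulVec]
      funext x
      cases x with
      | inl i => simpa using congrFun hw1 i
      | inr i =>
        simp only [Sum.elim_inr, Sum.elim_comp_inl, Sum.elim_comp_inr]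
        rw [Matrix.neg_mulVec, Matrix.mulVec_neg]
        simpa using congrFun hw2 i
  set g : (Fin m ⊕ Fin m → ℤ) →ₗ[ℤ] (ℤ ⧸ I) × (ℤ ⧸ I) :=
    (I.mkQ ∘ₗ LinearMap.proj (Sum.inl i0)).prod (I.mkQ ∘ₗ LinearMap.proj (Sum.inr i0)) with hg
  have hgapp : ∀ v, g v = (I.mkQ (v (Sum.inl i0)), I.mkQ (v (Sum.inr i0))) := fun v => rfl
  have hker : LinearMap.range (Matrix.toLin' M) = LinearMap.ker g := by
    ext v
    rw [LinearMap.mem_range, LinearMap.mem_ker]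
    simp only [Matrix.toLin'_apply]
    rw [show (∃ y, M.mulVec y = v) ↔ _ from keyM v, hgapp, Prod.mk_eq_zero,
      Submodule.mkQ_apply, Submodule.mkQ_apply, Submodule.Quotient.mk_eq_zero,
      Submodule.Quotient.mk_eq_zero, hI, Ideal.mem_span_singleton, Ideal.mem_span_singleton]
  have hsurj : Function.Surjective g := by
    rintro ⟨a, b⟩
    obtain ⟨x, hx⟩ := Submodule.mkQ_surjective I a
    obtain ⟨y, hy⟩ := Submodule.mkQ_surjective I b
    refine ⟨Sum.elim (Pi.single i0 x) (Pi.single i0 y), ?_⟩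
    rw [hgapp]
    simp [hx, hy]
  have e := (Submodule.quotEquivOfEq _ _ hker).trans (g.quotKerEquivOfSurjective hsurj)
  refine ⟨⟨e.toAddEquiv⟩, fun hne => ?_⟩
  haveI : NeZero (φ.eval 0).natAbs := ⟨Int.natAbs_ne_zero.mpr hne⟩
  haveI : Finite (ℤ ⧸ I) := Finite.of_equiv _ (Int.quotientSpanEquivZMod (φ.eval 0)).symm.toEquiv
  exact Finite.of_equiv _ e.symm.toEquiv
end

section
/- Let m ≥ 1 and let E be an m×m integer matrix all of whose entries are even. Let X = [[I, I],[0, I]] and L = [[−I, E],[0, −I]] be 2m×2m integer matrices written in m×m blocks. Define the ℤ-linear map ∂₁ : ℤ^{2m} × ℤ^{2m} → ℤ^{2m} on row vectors by ∂₁(v, w) = v·(X − I₂ₘ) + w·(L − I₂ₘ) (row vector times matrix on the right, I₂ₘ the 2m×2m identity). Then the cokernel ℤ^{2m} / image(∂₁) is isomorphic as an abelian group to (ℤ/2)^m. -/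
/-- Let `X = [[I,I],[0,I]]` and `L = [[-I,E],[0,-I]]` with `E` an integer matrix with
even entries, and let `∂₁(v, w) = v·(X - I) + w·(L - I)` on row vectors. Then the
cokernel `ℤ^{2m} / image ∂₁` is isomorphic to `(ℤ/2)^m`. -/
theorem stmt_6 (m : ℕ) (hm : 1 ≤ m) (E : Matrix (Fin m) (Fin m) ℤ)
    (hE : ∀ i j, 2 ∣ E i j)
    (X L : Matrix (Fin m ⊕ Fin m) (Fin m ⊕ Fin m) ℤ)
    (hX : X = Matrix.fromBlocks 1 1 0 1)
    (hL : L = Matrix.fromBlocks (-1) E 0 (-1))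
    (d1 : ((Fin m ⊕ Fin m → ℤ) × (Fin m ⊕ Fin m → ℤ)) →ₗ[ℤ] (Fin m ⊕ Fin m → ℤ))
    (hd1 : ∀ v w : Fin m ⊕ Fin m → ℤ,
      d1 (v, w) = Matrix.vecMul v (X - 1) + Matrix.vecMul w (L - 1)) :
    Nonempty (((Fin m ⊕ Fin m → ℤ) ⧸ LinearMap.range d1) ≃+ (Fin m → ZMod 2)) := by
  have hX1 : X - 1 = Matrix.fromBlocks 0 1 0 0 := by
    rw [hX, ← Matrix.fromBlocks_one, sub_eq_add_neg, Matrix.fromBlocks_neg,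
      Matrix.fromBlocks_add]
    congr 1 <;> simp
  have hL1 : L - 1 = Matrix.fromBlocks (-2) E 0 (-2) := by
    rw [hL, ← Matrix.fromBlocks_one, sub_eq_add_neg, Matrix.fromBlocks_neg,
      Matrix.fromBlocks_add, Matrix.fromBlocks_inj]
    refine ⟨by norm_num, by simp, by simp, by norm_num⟩
  -- explicit formula for d1
  have hform : ∀ v w : Fin m ⊕ Fin m → ℤ,
      d1 (v, w) = Sum.elim (Matrix.vecMul (w ∘ Sum.inl) (-2 : Matrix (Fin m) (Fin m) ℤ))
        (Matrix.vecMul (v ∘ Sum.inl) (1 : Matrix (Fin m) (Fin m) ℤ)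
          + (Matrix.vecMul (w ∘ Sum.inl) E + Matrix.vecMul (w ∘ Sum.inr) (-2 : Matrix (Fin m) (Fin m) ℤ))) := by
    intro v w
    rw [hd1, hX1, hL1, Matrix.vecMul_fromBlocks, Matrix.vecMul_fromBlocks]
    funext j
    cases j <;> simp [Matrix.vecMul_zero] <;> ring
  let g : (Fin m ⊕ Fin m → ℤ) →ₗ[ℤ] (Fin m → ZMod 2) :=
    { toFun := fun u i => (u (Sum.inl i) : ZMod 2)
      map_add' := by intros x y; funext i; simp [Pi.add_apply]
      map_smul' := by intros a x; funext i; simp [Pi.smul_apply, zsmul_eq_mul] }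
  have hsurj : Function.Surjective g := by
    intro c
    refine ⟨Sum.elim (fun i => ((c i).val : ℤ)) 0, ?_⟩
    funext i
    simp [g, ZMod.natCast_val, ZMod.intCast_cast, ZMod.cast_id]
  have hneg2 : ∀ (x : Fin m → ℤ) (i : Fin m),
      Matrix.vecMul x (-2 : Matrix (Fin m) (Fin m) ℤ) i = -2 * x i := by
    intro x i
    have h2 : (-2 : Matrix (Fin m) (Fin m) ℤ) = -(1 + 1) := by norm_num
    rw [h2, Matrix.vecMul_neg, Matrix.vecMul_add, Matrix.vecMul_one]
    simp; ring
  have hker : LinearMap.range d1 = LinearMap.ker g := by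
    apply le_antisymm
    · rintro _ ⟨⟨v, w⟩, rfl⟩
      rw [LinearMap.mem_ker, hform]
      funext i
      show ((Sum.elim _ _ (Sum.inl i) : ℤ) : ZMod 2) = 0
      rw [Sum.elim_inl, hneg2]
      push_cast
      simp only [neg_mul, neg_eq_zero, mul_eq_zero]
      exact Or.inl (by decide)
    · intro u hu
      rw [LinearMap.mem_ker] at hu
      have hu2 : ∀ i, 2 ∣ u (Sum.inl i) := by
        intro i
        have := congrFun hu i
        simpa [g, ZMod.intCast_zmod_eq_zero_iff_dvd] using this
      set c : Fin m → ℤ := fun i => u (Sum.inl i) / 2 with hc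
      have hcc : ∀ i, 2 * c i = u (Sum.inl i) := fun i => Int.mul_ediv_cancel' (hu2 i)
      set w : Fin m ⊕ Fin m → ℤ := Sum.elim (fun i => -(c i)) 0 with hw
      set v : Fin m ⊕ Fin m → ℤ :=
        Sum.elim (fun i => u (Sum.inr i) - (Matrix.vecMul (w ∘ Sum.inl) E) i) 0 with hv
      refine ⟨(v, w), ?_⟩
      rw [hform]
      funext j
      cases j with
      | inl i =>
          simp only [Sum.elim_inl, hneg2]
          rw [hw]
          simp only [Function.comp, Sum.elim_inl]
          rw [show -2 * -c i = 2 * c i by ring, hcc]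
      | inr i =>
          simp only [Sum.elim_inr, Matrix.vecMul_one, Pi.add_apply, hneg2]
          rw [hv]
          simp only [Function.comp, Sum.elim_inl]
          simp only [hw, Sum.elim_inr, Pi.zero_apply, mul_zero, neg_zero, add_zero]
          ring
  rw [hker]
  exact ⟨(g.quotKerEquivOfSurjective hsurj).toAddEquiv⟩
end

section
/- Let m ≥ 1 and let E be an m×m integer matrix all of whose entries are even. Let X = [[I, I],[0, I]] and L = [[−I, E],[0, −I]] be 2m×2m integer matrices written in m×m blocks (these satisfy X·L = L·X). Define ℤ-linear maps on row vectors: ∂₁ : ℤ^{2m} × ℤ^{2m} → ℤ^{2m}, ∂₁(v, w) = v·(X − I₂ₘ) + w·(L − I₂ₘ), and ∂₂ : ℤ^{2m} → ℤ^{2m} × ℤ^{2m}, ∂₂(v) = (v·(I₂ₘ − L), v·(X − I₂ₘ)). Then ∂₁ ∘ ∂₂ = 0, and the quotient group ker(∂₁) / image(∂₂) is isomorphic as an abelian group to (ℤ/2)^m. -/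
/-!
In block coordinates `v = (v₁, v₂)` one has `v (X - 1) = (0, v₁)` and
`w (L - 1) = (-2 w₁, w₁ E - 2 w₂)`. Hence the cycles `(v, w)` of `∂₁` are those with `w₁ = 0` and
`v₁ = 2 w₂`, freely parametrised by `(v₂, w₂)`, while `∂₂ u = ((2 u₁, 2 u₂ - u₁ E), (0, u₁))`.
Since `E` is even, a cycle is a boundary exactly when `v₂` is even, so `v₂ mod 2` identifies
`H₁` with `(ℤ/2)^m`. That `∂₁ ∘ ∂₂ = 0` is the relation `XL = LX`.
-/

open Matrix LinearMap

section ChainComplex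

variable {ι R : Type*} [Fintype ι] [DecidableEq ι] [CommRing R]

/-- The twisted chain complex of the torus `⟨x, l | xl = lx⟩` on row vectors, where `X` and `L`
are the images of `x` and `l`. -/
def boundaryOne (X L : Matrix ι ι R) : (ι → R) × (ι → R) →ₗ[R] ι → R :=
  (X - 1).vecMulLinear.coprod (L - 1).vecMulLinear

def boundaryTwo (X L : Matrix ι ι R) : (ι → R) →ₗ[R] (ι → R) × (ι → R) :=
  (1 - L).vecMulLinear.prod (X - 1).vecMulLinear

@[simp]
lemma boundaryOne_apply (X L : Matrix ι ι R) (v w : ι → R) :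
    boundaryOne X L (v, w) = v ᵥ* (X - 1) + w ᵥ* (L - 1) := rfl

@[simp]
lemma boundaryTwo_apply (X L : Matrix ι ι R) (v : ι → R) :
    boundaryTwo X L v = (v ᵥ* (1 - L), v ᵥ* (X - 1)) := rfl

lemma boundaryOne_comp_boundaryTwo {X L : Matrix ι ι R} (h : Commute X L) :
    boundaryOne X L ∘ₗ boundaryTwo X L = 0 := by
  refine LinearMap.ext fun v => ?_
  have key : (1 - L) * (X - 1) + (X - 1) * (L - 1) = X * L - L * X := by noncomm_ring
  simp [vecMul_vecMul, ← vecMul_add, key, h.eq]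

abbrev twistedH₁ (X L : Matrix ι ι R) : Type _ :=
  ker (boundaryOne X L) ⧸ (range (boundaryTwo X L)).comap (ker (boundaryOne X L)).subtype

end ChainComplex

lemma fromBlocks_sub_one {l o R : Type*} [DecidableEq l] [DecidableEq o] [Ring R]
    (A : Matrix l l R) (B : Matrix l o R) (C : Matrix o l R) (D : Matrix o o R) :
    fromBlocks A B C D - 1 = fromBlocks (A - 1) B C (D - 1) := by
  rw [← fromBlocks_one, sub_eq_add_neg, fromBlocks_neg, fromBlocks_add]
  simp [sub_eq_add_neg]

section BlockMatrices

variable (n R : Type*) [Fintype n] [DecidableEq n] [Ring R]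

/-- `X = γ_φ(x)`; `longitudeMatrix E` is `L = γ_φ(l)`. -/
def meridianMatrix : Matrix (n ⊕ n) (n ⊕ n) R := fromBlocks 1 1 0 1

variable {n R}

def longitudeMatrix (E : Matrix n n R) : Matrix (n ⊕ n) (n ⊕ n) R := fromBlocks (-1) E 0 (-1)

lemma commute_meridianMatrix_longitudeMatrix (E : Matrix n n R) :
    Commute (meridianMatrix n R) (longitudeMatrix E) := by
  simp only [Commute, SemiconjBy, meridianMatrix, longitudeMatrix, fromBlocks_multiply]
  congr 1 <;> noncomm_ring

lemma vecMul_meridianMatrix_sub_one (v : n ⊕ n → R) :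
    v ᵥ* (meridianMatrix n R - 1) = Sum.elim (0 : n → R) (v ∘ Sum.inl) := by
  rw [meridianMatrix, fromBlocks_sub_one, vecMul_fromBlocks]
  simp

lemma vecMul_longitudeMatrix_sub_one (E : Matrix n n R) (v : n ⊕ n → R) :
    v ᵥ* (longitudeMatrix E - 1) =
      Sum.elim (-(2 • (v ∘ Sum.inl))) ((v ∘ Sum.inl) ᵥ* E - 2 • (v ∘ Sum.inr)) := by
  rw [longitudeMatrix, fromBlocks_sub_one, vecMul_fromBlocks,
    show (-1 - 1 : Matrix n n R) = -(2 • 1) by abel]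
  simp only [vecMul_neg, vecMul_smul, vecMul_one, vecMul_zero, add_zero, sub_eq_add_neg]

lemma vecMul_one_sub_longitudeMatrix (E : Matrix n n R) (v : n ⊕ n → R) :
    v ᵥ* (1 - longitudeMatrix E) =
      Sum.elim (2 • (v ∘ Sum.inl)) (2 • (v ∘ Sum.inr) - (v ∘ Sum.inl) ᵥ* E) := by
  rw [← neg_sub, vecMul_neg, vecMul_longitudeMatrix_sub_one, ← Sum.elim_neg_neg, neg_neg,
    neg_sub]

end BlockMatrices

section IntegerHomology

variable {n : Type*} [Fintype n]

lemma two_dvd_vecMul {E : Matrix n n ℤ} (hE : ∀ i j, 2 ∣ E i j) (v : n → ℤ) (j : n) :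
    2 ∣ (v ᵥ* E) j :=
  Finset.dvd_sum fun k _ => (hE k j).mul_left _

variable [DecidableEq n] (E : Matrix n n ℤ)

lemma mem_ker_boundaryOne_iff {v w : n ⊕ n → ℤ} :
    (v, w) ∈ ker (boundaryOne (meridianMatrix n ℤ) (longitudeMatrix E)) ↔
      w ∘ Sum.inl = 0 ∧ v ∘ Sum.inl = 2 • (w ∘ Sum.inr) := by
  rw [mem_ker, boundaryOne_apply, vecMul_meridianMatrix_sub_one, vecMul_longitudeMatrix_sub_one,
    ← Sum.elim_add_add, ← Sum.elim_zero_zero, Sum.elim_eq_iff, zero_add, neg_eq_zero,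
    smul_eq_zero_iff_right two_ne_zero]
  constructor
  · rintro ⟨hw, h⟩
    rw [hw, zero_vecMul, zero_sub, ← sub_eq_add_neg, sub_eq_zero] at h
    exact ⟨hw, h⟩
  · rintro ⟨hw, hv⟩
    rw [hw, hv, zero_vecMul]
    simp

lemma mem_range_boundaryTwo_iff {E : Matrix n n ℤ} (hE : ∀ i j, 2 ∣ E i j) {v w : n ⊕ n → ℤ}
    (hvw : (v, w) ∈ ker (boundaryOne (meridianMatrix n ℤ) (longitudeMatrix E))) :
    (v, w) ∈ range (boundaryTwo (meridianMatrix n ℤ) (longitudeMatrix E)) ↔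
      ∀ i, 2 ∣ v (Sum.inr i) := by
  constructor
  · rintro ⟨u, hu⟩ i
    rw [boundaryTwo_apply, Prod.mk.injEq] at hu
    rw [← hu.1, vecMul_one_sub_longitudeMatrix]
    exact dvd_sub (dvd_mul_right 2 _) (two_dvd_vecMul hE _ i)
  · intro hv
    obtain ⟨hw, hv₁⟩ := (mem_ker_boundaryOne_iff E).1 hvw
    choose c hc using fun i => dvd_add (hv i) (two_dvd_vecMul hE (w ∘ Sum.inr) i)
    refine ⟨Sum.elim (w ∘ Sum.inr) c, ?_⟩
    rw [boundaryTwo_apply, vecMul_one_sub_longitudeMatrix, vecMul_meridianMatrix_sub_one,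
      Sum.elim_comp_inl, Sum.elim_comp_inr]
    ext (i | i)
    · simpa using (congrFun hv₁ i).symm
    · show 2 • c i - ((w ∘ Sum.inr) ᵥ* E) i = v (Sum.inr i)
      rw [two_nsmul]
      linarith [hc i]
    · exact (congrFun hw i).symm
    · rfl

def cycleParity : ker (boundaryOne (meridianMatrix n ℤ) (longitudeMatrix E)) →ₗ[ℤ] n → ZMod 2 :=
  (Int.castAddHom (ZMod 2)).toIntLinearMap.compLeft n ∘ₗ funLeft ℤ ℤ Sum.inr ∘ₗ
    fst ℤ _ _ ∘ₗ (ker _).subtype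

lemma cycleParity_apply (x : ker (boundaryOne (meridianMatrix n ℤ) (longitudeMatrix E))) (i : n) :
    cycleParity E x i = ((x : (n ⊕ n → ℤ) × (n ⊕ n → ℤ)).1 (Sum.inr i) : ZMod 2) := rfl

lemma cycleParity_surjective : Function.Surjective (cycleParity E) := by
  intro y
  refine ⟨⟨(Sum.elim 0 fun i => (y i).val, 0), (mem_ker_boundaryOne_iff E).2 ⟨rfl, ?_⟩⟩, ?_⟩
  · simp
  · ext i
    simp [cycleParity_apply]

lemma ker_cycleParity {E : Matrix n n ℤ} (hE : ∀ i j, 2 ∣ E i j) :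
    ker (cycleParity E) = (range (boundaryTwo (meridianMatrix n ℤ) (longitudeMatrix E))).comap
      (ker (boundaryOne (meridianMatrix n ℤ) (longitudeMatrix E))).subtype := by
  ext ⟨⟨v, w⟩, hvw⟩
  simp only [mem_ker, Submodule.mem_comap, Submodule.subtype_apply, funext_iff, cycleParity_apply,
    Pi.zero_apply, ZMod.intCast_zmod_eq_zero_iff_dvd, Nat.cast_ofNat,
    mem_range_boundaryTwo_iff hE hvw]

noncomputable def twistedH₁EquivZModTwo {E : Matrix n n ℤ} (hE : ∀ i j, 2 ∣ E i j) :
    twistedH₁ (meridianMatrix n ℤ) (longitudeMatrix E) ≃ₗ[ℤ] (n → ZMod 2) :=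
  (Submodule.quotEquivOfEq _ _ (ker_cycleParity hE).symm).trans
    ((cycleParity E).quotKerEquivOfSurjective (cycleParity_surjective E))

end IntegerHomology

theorem stmt_7_general (m : ℕ) (E : Matrix (Fin m) (Fin m) ℤ)
    (hE : ∀ i j, 2 ∣ E i j)
    (X L : Matrix (Fin m ⊕ Fin m) (Fin m ⊕ Fin m) ℤ)
    (hX : X = Matrix.fromBlocks 1 1 0 1)
    (hL : L = Matrix.fromBlocks (-1) E 0 (-1))
    (d1 : ((Fin m ⊕ Fin m → ℤ) × (Fin m ⊕ Fin m → ℤ)) →ₗ[ℤ] (Fin m ⊕ Fin m → ℤ))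
    (hd1 : ∀ v w : Fin m ⊕ Fin m → ℤ,
      d1 (v, w) = Matrix.vecMul v (X - 1) + Matrix.vecMul w (L - 1))
    (d2 : (Fin m ⊕ Fin m → ℤ) →ₗ[ℤ] ((Fin m ⊕ Fin m → ℤ) × (Fin m ⊕ Fin m → ℤ)))
    (hd2 : ∀ v : Fin m ⊕ Fin m → ℤ,
      d2 v = (Matrix.vecMul v (1 - L), Matrix.vecMul v (X - 1))) :
    d1.comp d2 = 0 ∧
    Nonempty ((↥(LinearMap.ker d1) ⧸
        Submodule.comap (LinearMap.ker d1).subtype (LinearMap.range d2))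
      ≃+ (Fin m → ZMod 2)) := by
  obtain rfl : d1 = boundaryOne X L := LinearMap.ext fun x => hd1 x.1 x.2
  obtain rfl : d2 = boundaryTwo X L := LinearMap.ext hd2
  subst hX hL
  exact ⟨boundaryOne_comp_boundaryTwo (commute_meridianMatrix_longitudeMatrix E),
    ⟨(twistedH₁EquivZModTwo hE).toAddEquiv⟩⟩

/-- Let `X = [[I,I],[0,I]]` and `L = [[-I,E],[0,-I]]` with `E` an integer matrix with
even entries, `∂₁(v, w) = v·(X - I) + w·(L - I)` and `∂₂(v) = (v·(I - L), v·(X - I))`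
on row vectors. Then `∂₁ ∘ ∂₂ = 0` and `ker ∂₁ / image ∂₂ ≅ (ℤ/2)^m`. -/
theorem stmt_7 (m : ℕ) (hm : 1 ≤ m) (E : Matrix (Fin m) (Fin m) ℤ)
    (hE : ∀ i j, 2 ∣ E i j)
    (X L : Matrix (Fin m ⊕ Fin m) (Fin m ⊕ Fin m) ℤ)
    (hX : X = Matrix.fromBlocks 1 1 0 1)
    (hL : L = Matrix.fromBlocks (-1) E 0 (-1))
    (d1 : ((Fin m ⊕ Fin m → ℤ) × (Fin m ⊕ Fin m → ℤ)) →ₗ[ℤ] (Fin m ⊕ Fin m → ℤ))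
    (hd1 : ∀ v w : Fin m ⊕ Fin m → ℤ,
      d1 (v, w) = Matrix.vecMul v (X - 1) + Matrix.vecMul w (L - 1))
    (d2 : (Fin m ⊕ Fin m → ℤ) →ₗ[ℤ] ((Fin m ⊕ Fin m → ℤ) × (Fin m ⊕ Fin m → ℤ)))
    (hd2 : ∀ v : Fin m ⊕ Fin m → ℤ,
      d2 v = (Matrix.vecMul v (1 - L), Matrix.vecMul v (X - 1))) :
    d1.comp d2 = 0 ∧
    Nonempty ((↥(LinearMap.ker d1) ⧸
        Submodule.comap (LinearMap.ker d1).subtype (LinearMap.range d2))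
      ≃+ (Fin m → ZMod 2)) :=
  stmt_7_general m E hE X L hX hL d1 hd1 d2 hd2
end

section
/- Let w ∈ ℂ and let A = [[1, 1],[0, 1]] and B = [[1, 0],[w, 1]] be 2×2 complex matrices. Then B·A·B⁻¹·A·B = A·B·A⁻¹·B·A if and only if w² − w + 1 = 0, i.e., if and only if w = (1 + √−3)/2 or w = (1 − √−3)/2. -/
/-- For `A = [[1,1],[0,1]]` and `B = [[1,0],[w,1]]` over `ℂ`, the figure-eight
relation `B·A·B⁻¹·A·B = A·B·A⁻¹·B·A` holds if and only if `w² - w + 1 = 0`,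
i.e. iff `w = (1 + √-3)/2` or `w = (1 - √-3)/2`. -/
theorem stmt_13 (w : ℂ) (A B : Matrix (Fin 2) (Fin 2) ℂ)
    (hA : A = !![1, 1; 0, 1]) (hB : B = !![1, 0; w, 1]) :
    (B * A * B⁻¹ * A * B = A * B * A⁻¹ * B * A ↔ w ^ 2 - w + 1 = 0) ∧
    (w ^ 2 - w + 1 = 0 ↔
      w = (1 + Complex.I * Real.sqrt 3) / 2 ∨ w = (1 - Complex.I * Real.sqrt 3) / 2) := by
  have hAinv : A⁻¹ = !![1, -1; 0, 1] := by
    rw [hA]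
    apply Matrix.inv_eq_right_inv
    ext i j
    fin_cases i <;> fin_cases j <;>
      simp [Matrix.mul_apply, Fin.sum_univ_two, Matrix.one_apply]
  have hBinv : B⁻¹ = !![1, 0; -w, 1] := by
    rw [hB]
    apply Matrix.inv_eq_right_inv
    ext i j
    fin_cases i <;> fin_cases j <;>
      simp [Matrix.mul_apply, Fin.sum_univ_two, Matrix.one_apply]
  constructor
  · rw [hAinv, hBinv, hA, hB]
    constructor
    · intro h
      have := congrArg (fun M => M 0 1) h
      simp [Matrix.mul_apply, Fin.sum_univ_two] at this
      linear_combination this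
    · intro h
      ext i j
      fin_cases i <;> fin_cases j <;>
        simp [Matrix.mul_apply, Fin.sum_univ_two]
      all_goals first
        | ring1
        | linear_combination h
        | linear_combination (-w) * h
  · have h3 : (Complex.I * Real.sqrt 3) ^ 2 = -3 := by
      rw [mul_pow, Complex.I_sq]
      norm_cast
      rw [Real.sq_sqrt (by norm_num : (3:ℝ) ≥ 0)]
      norm_num
    constructor
    · intro h
      have : (w - (1 + Complex.I * Real.sqrt 3) / 2) * (w - (1 - Complex.I * Real.sqrt 3) / 2) = 0 := by
        linear_combination h - h3 / 4
      rcases mul_eq_zero.mp this with h' | h'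
      · left; exact sub_eq_zero.mp h'
      · right; exact sub_eq_zero.mp h'
    · rintro (h | h) <;> subst h <;> linear_combination h3 / 4
end
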